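/- arXiv:1407.4029 — 4 statements merged into one kernel-verified Lean document; each statement's English description precedes it below -/
import Mathlib

section
/- Let A, B, C, D > 0 and p > 2. Then the system t⁻ = A(t⁺)^{p-1} − B t⁺, t⁺ = C(t⁻)^{p-2} t⁻ − D t⁻ has at most one solution (t⁺, t⁻) with t⁺ > 0 and t⁻ > 0. -/
/-!
Writing the equations as `t⁻ = (A (t⁺)^(p-2) - B) t⁺` and `t⁺ = (C (t⁻)^(p-2) - D) t⁻`, the ratio
`t⁻ / t⁺` is strictly increasing in `t⁺` and the ratio `t⁺ / t⁻` is strictly increasing in `t⁻`.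
Two solutions with `t⁺₁ < t⁺₂` would therefore have `t⁻₁ / t⁺₁ < t⁻₂ / t⁺₂`, hence `t⁻₁ < t⁻₂`,
hence `t⁺₁ / t⁻₁ < t⁺₂ / t⁻₂`: the two ratio inequalities contradict each other.
-/

open Real

lemma ratio_lt_ratio_of_lt {E F q t₁ t₂ : ℝ} (hE : 0 < E) (hq : 0 < q) (ht₁ : 0 < t₁)
    (hlt : t₁ < t₂) :
    (E * t₁ ^ q * t₁ - F * t₁) * t₂ < (E * t₂ ^ q * t₂ - F * t₂) * t₁ := by
  have hpow : t₁ ^ q < t₂ ^ q := rpow_lt_rpow ht₁.le hlt hq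
  have hdiff : (E * t₂ ^ q * t₂ - F * t₂) * t₁ - (E * t₁ ^ q * t₁ - F * t₁) * t₂
      = E * t₁ * t₂ * (t₂ ^ q - t₁ ^ q) := by ring
  have hpos : 0 < E * t₁ * t₂ * (t₂ ^ q - t₁ ^ q) :=
    mul_pos (by have := ht₁.trans hlt; positivity) (sub_pos.2 hpow)
  linarith

lemma not_lt_of_coupled_system {A B C D q t₁ s₁ t₂ s₂ : ℝ} (hA : 0 < A) (hC : 0 < C)
    (hq : 0 < q) (ht₁ : 0 < t₁) (hs₁ : 0 < s₁)
    (h₁ : s₁ = A * t₁ ^ q * t₁ - B * t₁) (h₂ : t₁ = C * s₁ ^ q * s₁ - D * s₁)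
    (h₃ : s₂ = A * t₂ ^ q * t₂ - B * t₂) (h₄ : t₂ = C * s₂ ^ q * s₂ - D * s₂) :
    ¬ t₁ < t₂ := by
  intro ht
  have hts : s₁ * t₂ < s₂ * t₁ := by
    rw [h₁, h₃]; exact ratio_lt_ratio_of_lt hA hq ht₁ ht
  have hs : s₁ < s₂ := by nlinarith
  have hst : t₁ * s₂ < t₂ * s₁ := by
    rw [h₂, h₄]; exact ratio_lt_ratio_of_lt hC hq hs₁ hs
  linarith

lemma rpow_sub_one_eq_rpow_sub_two_mul {t : ℝ} (ht : t ≠ 0) (p : ℝ) :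
    t ^ (p - 1) = t ^ (p - 2) * t := by
  rw [show p - 1 = p - 2 + 1 by ring, rpow_add_one ht]

theorem stmt_0_general (A B C D p : ℝ) (hA : 0 < A) (hC : 0 < C)
    (hp : 2 < p) (t₁ s₁ t₂ s₂ : ℝ) (ht₁ : 0 < t₁) (hs₁ : 0 < s₁) (ht₂ : 0 < t₂) (hs₂ : 0 < s₂)
    (h₁ : s₁ = A * t₁ ^ (p - 1) - B * t₁) (h₂ : t₁ = C * s₁ ^ (p - 2) * s₁ - D * s₁)
    (h₃ : s₂ = A * t₂ ^ (p - 1) - B * t₂) (h₄ : t₂ = C * s₂ ^ (p - 2) * s₂ - D * s₂) :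
    t₁ = t₂ ∧ s₁ = s₂ := by
  have hq : 0 < p - 2 := by linarith
  rw [rpow_sub_one_eq_rpow_sub_two_mul ht₁.ne', ← mul_assoc] at h₁
  rw [rpow_sub_one_eq_rpow_sub_two_mul ht₂.ne', ← mul_assoc] at h₃
  have ht : t₁ = t₂ := le_antisymm
    (not_lt.1 (not_lt_of_coupled_system hA hC hq ht₂ hs₂ h₃ h₄ h₁ h₂))
    (not_lt.1 (not_lt_of_coupled_system hA hC hq ht₁ hs₁ h₁ h₂ h₃ h₄))
  exact ⟨ht, by rw [h₁, h₃, ht]⟩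

theorem stmt_0 (A B C D p : ℝ) (hA : 0 < A) (hB : 0 < B) (hC : 0 < C) (hD : 0 < D)
    (hp : 2 < p) (t₁ s₁ t₂ s₂ : ℝ) (ht₁ : 0 < t₁) (hs₁ : 0 < s₁) (ht₂ : 0 < t₂) (hs₂ : 0 < s₂)
    (h₁ : s₁ = A * t₁ ^ (p - 1) - B * t₁) (h₂ : t₁ = C * s₁ ^ (p - 2) * s₁ - D * s₁)
    (h₃ : s₂ = A * t₂ ^ (p - 1) - B * t₂) (h₄ : t₂ = C * s₂ ^ (p - 2) * s₂ - D * s₂) :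
    t₁ = t₂ ∧ s₁ = s₂ :=
  stmt_0_general A B C D p hA hC hp t₁ s₁ t₂ s₂ ht₁ hs₁ ht₂ hs₂ h₁ h₂ h₃ h₄
end

section
/- Let Ω ⊆ ℝ^N be a measurable set of finite positive measure and φ : Ω → ℝ a measurable function with 0 < ∫_Ω |φ|² dμ < ∞ and such that the family (|φ|^p)_{p ∈ [2, p̄]} is dominated by an integrable function together with |ln|φ|| · |φ|^p. Define t_p := (∫_Ω |φ|² dμ / ∫_Ω |φ|^p dμ)^{1/(p-2)} for p > 2. Then t_p converges as p → 2⁺ to exp( − (∫_Ω ln|φ| · |φ|² dμ) / (∫_Ω |φ|² dμ) ), where s ln|s| is interpreted as 0 when s = 0. -/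
/-!
Write `F p = ∫_Ω |φ|^p`. Then `t_p = exp (-(log F p - log F 2) / (p - 2))`, so the claim is that
`log ∘ F` has right derivative `F'(2) / F(2)` at `2`, with `F'(2) = ∫_Ω ln|φ| |φ|²`. The difference
quotients `(|φ|^p - |φ|²) / (p - 2)` converge pointwise to `ln|φ| |φ|²`, and by the mean value
theorem they are bounded by `|ln|φ|| max(|φ|², |φ|^p̄)`, which the hypothesis dominates by an
integrable function; dominated convergence gives `F'(2)`.
-/

open MeasureTheory Real Filter Set Topology

theorem hasDerivAt_const_rpow_of_nonneg {s t : ℝ} (hs : 0 ≤ s) (ht : t ≠ 0) :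
    HasDerivAt (fun p => s ^ p) (s ^ t * log s) t := by
  rcases hs.eq_or_lt with rfl | hs
  · have hzero : (fun p : ℝ => (0 : ℝ) ^ p) =ᶠ[𝓝 t] fun _ => 0 := by
      filter_upwards [isOpen_ne.mem_nhds ht] with p hp
      exact zero_rpow hp
    simpa [zero_rpow ht] using (hasDerivAt_const t (0 : ℝ)).congr_of_eventuallyEq hzero
  · exact (hasStrictDerivAt_const_rpow hs t).hasDerivAt

theorem rpow_le_max_rpow_of_mem_Icc {s a b c : ℝ} (hs : 0 ≤ s) (ha : 0 ≤ a) (hc : c ∈ Icc a b) :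
    s ^ c ≤ max (s ^ a) (s ^ b) := by
  rcases le_total s 1 with hs1 | hs1
  · exact le_max_of_le_left (rpow_le_rpow_of_exponent_ge' hs hs1 ha hc.1)
  · exact le_max_of_le_right (rpow_le_rpow_of_exponent_le hs1 hc.2)

theorem abs_slope_rpow_le {s a b p : ℝ} (hs : 0 ≤ s) (ha : 0 < a) (hap : a < p) (hpb : p ≤ b) :
    |slope (fun t => s ^ t) a p| ≤ max (|log s| * s ^ a) (|log s| * s ^ b) := by
  have hderiv : ∀ t ∈ Ioo a p, HasDerivAt (fun t => s ^ t) (s ^ t * log s) t :=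
    fun t ht => hasDerivAt_const_rpow_of_nonneg hs (ha.trans ht.1).ne'
  have hcont : ContinuousOn (fun t => s ^ t) (Icc a p) := fun t ht =>
    (hasDerivAt_const_rpow_of_nonneg hs (ha.trans_le ht.1).ne').continuousAt.continuousWithinAt
  obtain ⟨c, hc, hslope⟩ := exists_hasDerivAt_eq_slope _ _ hap hcont hderiv
  rw [slope_def_field, ← hslope, abs_mul, abs_of_nonneg (rpow_nonneg hs c), mul_comm,
    ← mul_max_of_nonneg _ _ (abs_nonneg _)]
  exact mul_le_mul_of_nonneg_left
    (rpow_le_max_rpow_of_mem_Icc hs ha.le ⟨hc.1.le, hc.2.le.trans hpb⟩) (abs_nonneg _)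

theorem tendsto_slope_rpow {s a : ℝ} (hs : 0 ≤ s) (ha : a ≠ 0) :
    Tendsto (slope (fun t => s ^ t) a) (𝓝[≠] a) (𝓝 (log s * s ^ a)) := by
  rw [mul_comm]
  exact hasDerivAt_iff_tendsto_slope.mp (hasDerivAt_const_rpow_of_nonneg hs ha)

theorem hasDerivWithinAt_integral_abs_rpow {α : Type*} [MeasurableSpace α] {ν : Measure α}
    {f g : α → ℝ} (hf : AEStronglyMeasurable f ν) (hg : Integrable g ν) {a b : ℝ} (ha : 0 < a)
    (hab : a < b)
    (hdom : ∀ p ∈ Icc a b, ∀ᵐ x ∂ν, |f x| ^ p ≤ g x ∧ abs (log |f x|) * |f x| ^ p ≤ g x) :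
    HasDerivWithinAt (fun p => ∫ x, |f x| ^ p ∂ν) (∫ x, log |f x| * |f x| ^ a ∂ν) (Ioi a) a := by
  have hmeas : ∀ p : ℝ, 0 ≤ p → AEStronglyMeasurable (fun x => |f x| ^ p) ν := fun p hp =>
    ((continuous_rpow_const hp).comp continuous_abs).comp_aestronglyMeasurable hf
  have hint : ∀ p ∈ Icc a b, Integrable (fun x => |f x| ^ p) ν := fun p hp =>
    hg.mono' (hmeas p (ha.le.trans hp.1)) <| (hdom p hp).mono fun x hx => by
      rw [norm_of_nonneg (rpow_nonneg (abs_nonneg _) _)]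
      exact hx.1
  have hnear : ∀ᶠ p in 𝓝[>] a, p ∈ Ioc a b := Ioc_mem_nhdsGT hab
  rw [hasDerivWithinAt_iff_tendsto_slope' self_notMem_Ioi]
  refine (tendsto_integral_filter_of_dominated_convergence
    (F := fun p x => slope (fun t => |f x| ^ t) a p) g ?_ ?_ hg ?_).congr' ?_
  · filter_upwards [hnear] with p hp
    simp only [slope_def_field]
    exact ((hmeas p (ha.trans hp.1).le).sub (hmeas a ha.le)).mul_const _
  · filter_upwards [hnear] with p hp
    filter_upwards [hdom a (left_mem_Icc.2 hab.le), hdom b (right_mem_Icc.2 hab.le)]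
      with x hxa hxb
    exact (abs_slope_rpow_le (abs_nonneg _) ha hp.1 hp.2).trans (max_le hxa.2 hxb.2)
  · exact Eventually.of_forall fun x => (tendsto_slope_rpow (abs_nonneg _) ha.ne').mono_left
      (nhdsWithin_mono _ fun p hp => ne_of_gt hp)
  · filter_upwards [hnear] with p hp
    simp only [slope_def_field]
    rw [integral_div,
      integral_sub (hint p (Ioc_subset_Icc_self hp)) (hint a (left_mem_Icc.2 hab.le))]

theorem tendsto_div_rpow_one_div_sub_of_hasDerivWithinAt {F : ℝ → ℝ} {a L : ℝ}
    (hF : HasDerivWithinAt F L (Ioi a) a) (ha : 0 < F a) :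
    Tendsto (fun p => (F a / F p) ^ (1 / (p - a))) (𝓝[>] a) (𝓝 (exp (-L / F a))) := by
  have hlog := (hasDerivAt_log ha.ne').comp_hasDerivWithinAt a hF
  rw [hasDerivWithinAt_iff_tendsto_slope' self_notMem_Ioi] at hlog
  have hpos : ∀ᶠ p in 𝓝[>] a, 0 < F p := hF.continuousWithinAt.eventually (eventually_gt_nhds ha)
  have hexp := (continuous_exp.tendsto _).comp hlog.neg
  rw [show -L / F a = -((F a)⁻¹ * L) by ring]
  refine hexp.congr' ?_
  filter_upwards [hpos] with p hp
  rw [Function.comp_apply, rpow_def_of_pos (div_pos ha hp), log_div ha.ne' hp.ne', slope_def_field,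
    Function.comp_apply, Function.comp_apply]
  congr 1
  ring

theorem stmt_1_general {α : Type*} [MeasurableSpace α] (μ : Measure α) (Ω : Set α)
    (φ : α → ℝ) (hφ : Measurable φ)
    (h2 : 0 < ∫ x in Ω, |φ x| ^ (2 : ℝ) ∂μ)
    (pbar : ℝ) (hpbar : 2 < pbar)
    (g : α → ℝ) (hg : IntegrableOn g Ω μ)
    (hdom : ∀ p ∈ Set.Icc (2 : ℝ) pbar, ∀ᵐ x ∂μ.restrict Ω,
      |φ x| ^ p ≤ g x ∧ abs (Real.log |φ x|) * |φ x| ^ p ≤ g x) :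
    Filter.Tendsto (fun p : ℝ =>
        ((∫ x in Ω, |φ x| ^ (2 : ℝ) ∂μ) / (∫ x in Ω, |φ x| ^ p ∂μ)) ^ (1 / (p - 2)))
      (nhdsWithin 2 (Set.Ioi 2))
      (nhds (Real.exp (-(∫ x in Ω,
          (if φ x = 0 then 0 else Real.log |φ x| * |φ x| ^ (2 : ℝ)) ∂μ)
        / (∫ x in Ω, |φ x| ^ (2 : ℝ) ∂μ)))) := by
  have hderiv := hasDerivWithinAt_integral_abs_rpow hφ.aestronglyMeasurable hg two_pos hpbar hdom
  have hite : (fun x => if φ x = 0 then 0 else log |φ x| * |φ x| ^ (2 : ℝ)) =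
      fun x => log |φ x| * |φ x| ^ (2 : ℝ) := by
    ext x
    split_ifs with h <;> simp [h]
  rw [hite]
  exact tendsto_div_rpow_one_div_sub_of_hasDerivWithinAt hderiv h2

theorem stmt_1 {α : Type*} [MeasurableSpace α] (μ : Measure α) (Ω : Set α)
    (hΩ : MeasurableSet Ω) (hpos : 0 < μ Ω) (hfin : μ Ω < ⊤)
    (φ : α → ℝ) (hφ : Measurable φ)
    (h2 : 0 < ∫ x in Ω, |φ x| ^ (2 : ℝ) ∂μ)
    (h2fin : IntegrableOn (fun x => |φ x| ^ (2 : ℝ)) Ω μ)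
    (pbar : ℝ) (hpbar : 2 < pbar)
    (g : α → ℝ) (hg : IntegrableOn g Ω μ)
    (hdom : ∀ p ∈ Set.Icc (2 : ℝ) pbar, ∀ᵐ x ∂μ.restrict Ω,
      |φ x| ^ p ≤ g x ∧ abs (Real.log |φ x|) * |φ x| ^ p ≤ g x) :
    Filter.Tendsto (fun p : ℝ =>
        ((∫ x in Ω, |φ x| ^ (2 : ℝ) ∂μ) / (∫ x in Ω, |φ x| ^ p ∂μ)) ^ (1 / (p - 2)))
      (nhdsWithin 2 (Set.Ioi 2))
      (nhds (Real.exp (-(∫ x in Ω,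
          (if φ x = 0 then 0 else Real.log |φ x| * |φ x| ^ (2 : ℝ)) ∂μ)
        / (∫ x in Ω, |φ x| ^ (2 : ℝ) ∂μ)))) :=
  stmt_1_general μ Ω φ hφ h2 pbar hpbar g hg hdom
end

section
/- Let s ∈ (0,1), β := 1/(2(1−s)), and let y, q, p ∈ ℝ² with q ≠ y. Under the change of variables x = y + u^β (q − y) + u^β v (p − q) for (u,v) ∈ (0,1)², the Jacobian factor transforms the integral ∫_T |x − y|^{−2s} dx over the triangle T with vertices y, q, p into 2|T| ∫₀¹∫₀¹ β u^{2β(1−s)−1} (|q−y|² + v²|p−q|²)^{−s} du dv with u^{2β(1−s)−1} ≡ 1, i.e. ∫_T |x−y|^{−2s} dx = 2|T| β ∫₀¹ (|q−y|² + v²|p−q|²)^{−s} dv, where |T| is the area of T and the angle of T at q is right (⟨q − y, p − q⟩ = 0). -/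
/-!
Write `a = q - y`, `c = p - q` and parametrize the triangle by `(t, v) ↦ y + t a + t v c` on
`(0,1)²`. Because `a ⟂ c`, in an orthonormal frame along `a, c` this map is
`(t, v) ↦ (‖a‖ t, ‖c‖ t v)`, with Jacobian `‖a‖ ‖c‖ t`, and by Pythagoras
`‖x - y‖ = t √(‖a‖² + v² ‖c‖²)`. The integrand therefore splits as
`‖a‖ ‖c‖ · t^(1-2s) · (‖a‖² + v² ‖c‖²)^(-s)`, and `∫₀¹ t^(1-2s) dt = 1 / (2(1-s)) = β`.
-/

open MeasureTheory Set Module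
open scoped RealInnerProductSpace

theorem integral_Ioo_zero_one_rpow {r : ℝ} (hr : -1 < r) :
    ∫ t in Ioo (0 : ℝ) 1, t ^ r = 1 / (r + 1) := by
  rw [← integral_Ioc_eq_integral_Ioo, ← intervalIntegral.integral_of_le zero_le_one,
    integral_rpow (Or.inl hr), Real.one_rpow, Real.zero_rpow (by linarith), sub_zero]

noncomputable def triangleChart (A B : ℝ) (w : Fin 2 → ℝ) : Fin 2 → ℝ :=
  ![A * w 0, B * (w 0 * w 1)]

noncomputable def triangleChartDeriv (A B : ℝ) (w : Fin 2 → ℝ) :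
    (Fin 2 → ℝ) →L[ℝ] (Fin 2 → ℝ) :=
  (Matrix.toLin' !![A, 0; B * w 1, B * w 0]).toContinuousLinearMap

theorem hasFDerivAt_triangleChart (A B : ℝ) (w : Fin 2 → ℝ) :
    HasFDerivAt (triangleChart A B) (triangleChartDeriv A B w) w := by
  refine hasFDerivAt_pi'' fun i => ?_
  have hproj (j : Fin 2) : HasFDerivAt (fun x : Fin 2 → ℝ => x j)
      (ContinuousLinearMap.proj (R := ℝ) (φ := fun _ : Fin 2 => ℝ) j) w :=
    hasFDerivAt_apply j w
  fin_cases i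
  · refine ((hproj 0).const_mul A).congr_fderiv ?_
    ext x
    simp [triangleChartDeriv, dotProduct, Fin.sum_univ_two]
  · refine (((hproj 0).mul (hproj 1)).const_mul B).congr_fderiv ?_
    ext x
    simp [triangleChartDeriv, dotProduct, Fin.sum_univ_two]
    ring

theorem det_triangleChartDeriv (A B : ℝ) (w : Fin 2 → ℝ) :
    (triangleChartDeriv A B w).det = A * B * w 0 := by
  rw [triangleChartDeriv, ContinuousLinearMap.det, LinearMap.coe_toContinuousLinearMap,
    LinearMap.det_toLin', Matrix.det_fin_two_of]
  ring

theorem injOn_triangleChart {A B : ℝ} (hA : A ≠ 0) (hB : B ≠ 0) :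
    InjOn (triangleChart A B) {w | w 0 ≠ 0} := by
  intro w hw w' _ h
  have h0 : w 0 = w' 0 := mul_left_cancel₀ hA (congr_fun h 0)
  have h1 : w 0 * w 1 = w' 0 * w' 1 := mul_left_cancel₀ hB (congr_fun h 1)
  rw [← h0] at h1
  ext i
  fin_cases i
  · exact h0
  · exact mul_left_cancel₀ hw h1

section OpenTriangle

variable {F : Type*} [NormedAddCommGroup F] [InnerProductSpace ℝ F]

theorem exists_orthonormalBasis_fin_two_of_inner_eq_zero (hF : finrank ℝ F = 2) {a c : F}
    (ha : a ≠ 0) (hc : c ≠ 0) (hac : ⟪a, c⟫ = 0) :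
    ∃ b : OrthonormalBasis (Fin 2) ℝ F, b 0 = ‖a‖⁻¹ • a ∧ b 1 = ‖c‖⁻¹ • c := by
  have hon : Orthonormal ℝ ![‖a‖⁻¹ • a, ‖c‖⁻¹ • c] := by
    simp [orthonormal_vecCons_iff, norm_smul, ha, hc, real_inner_smul_left,
      real_inner_smul_right, hac]
  have hcard : Fintype.card (Fin 2) = finrank ℝ F := by simp [hF]
  refine ⟨(basisOfOrthonormalOfCardEqFinrank hon hcard).toOrthonormalBasis ?_, ?_⟩
  · rwa [coe_basisOfOrthonormalOfCardEqFinrank]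
  · simp [coe_basisOfOrthonormalOfCardEqFinrank]

theorem norm_smul_add_mul_smul_of_inner_eq_zero {a c : F} (hac : ⟪a, c⟫ = 0) {t : ℝ}
    (ht : 0 ≤ t) (v : ℝ) :
    ‖t • a + (t * v) • c‖ = t * √(‖a‖ ^ 2 + v ^ 2 * ‖c‖ ^ 2) := by
  have horth : ⟪t • a, (t * v) • c⟫ = 0 := by
    rw [real_inner_smul_left, real_inner_smul_right, hac, mul_zero, mul_zero]
  refine (pow_left_inj₀ (norm_nonneg _) (by positivity) two_ne_zero).1 ?_
  rw [sq, norm_add_sq_eq_norm_sq_add_norm_sq_real horth, norm_smul, norm_smul, mul_pow,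
    Real.sq_sqrt (by positivity), Real.norm_eq_abs, Real.norm_eq_abs, abs_mul, ← sq_abs t,
    ← sq_abs v]
  ring

def openTriangle (y a c : F) : Set F :=
  {z | ∃ t ∈ Ioo (0 : ℝ) 1, ∃ v ∈ Ioo (0 : ℝ) 1, z = y + t • a + (t * v) • c}

theorem openTriangle_eq_image (y a c : F) :
    openTriangle y a c =
      (fun w : ℝ × ℝ => y + w.1 • a + (w.1 * w.2) • c) '' Ioo (0 : ℝ) 1 ×ˢ Ioo (0 : ℝ) 1 := by
  ext z
  constructor
  · rintro ⟨t, ht, v, hv, rfl⟩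
    exact ⟨(t, v), ⟨ht, hv⟩, rfl⟩
  · rintro ⟨⟨t, v⟩, ⟨ht, hv⟩, rfl⟩
    exact ⟨t, ht, v, hv, rfl⟩

variable [FiniteDimensional ℝ F] [MeasurableSpace F] [BorelSpace F]

theorem volume_openTriangle_of_eq_zero_or_eq_zero (hF : 1 < finrank ℝ F) (y : F) {a c : F}
    (hac : a = 0 ∨ c = 0) : volume (openTriangle y a c) = 0 := by
  set L := AffineSubspace.mk' y (ℝ ∙ (a + c))
  have hL : L ≠ ⊤ := by
    intro h
    have hdir : L.direction = ℝ ∙ (a + c) := AffineSubspace.direction_mk' y _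
    rw [h, AffineSubspace.direction_top] at hdir
    have hle := finrank_span_le_card (R := ℝ) ({a + c} : Set F)
    rw [← hdir, finrank_top, Set.toFinset_singleton, Finset.card_singleton] at hle
    omega
  refine measure_mono_null (fun z hz => ?_) (Measure.addHaar_affineSubspace volume L hL)
  obtain ⟨t, -, v, -, rfl⟩ := hz
  rw [SetLike.mem_coe, AffineSubspace.mem_mk', vsub_eq_sub, add_assoc, add_sub_cancel_left]
  rcases hac with rfl | rfl
  · simpa using Submodule.smul_mem _ (t * v) (Submodule.mem_span_singleton_self c)
  · simpa using Submodule.smul_mem _ t (Submodule.mem_span_singleton_self a)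

theorem setIntegral_openTriangle {G : Type*} [NormedAddCommGroup G] [NormedSpace ℝ G]
    (hF : finrank ℝ F = 2) (y : F) {a c : F} (hac : ⟪a, c⟫ = 0) (g : F → G) :
    ∫ x in openTriangle y a c, g x =
      (‖a‖ * ‖c‖) • ∫ w in Ioo (0 : ℝ) 1 ×ˢ Ioo (0 : ℝ) 1,
        w.1 • g (y + w.1 • a + (w.1 * w.2) • c) := by
  by_cases hdeg : a = 0 ∨ c = 0
  · rw [Measure.restrict_eq_zero.2 (volume_openTriangle_of_eq_zero_or_eq_zero (by omega) y hdeg)]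
    rcases hdeg with rfl | rfl <;> simp
  obtain ⟨ha, hc⟩ := not_or.1 hdeg
  obtain ⟨b, hb0, hb1⟩ := exists_orthonormalBasis_fin_two_of_inner_eq_zero hF ha hc hac
  set A := ‖a‖
  set B := ‖c‖
  have hA : 0 < A := norm_pos_iff.2 ha
  have hB : 0 < B := norm_pos_iff.2 hc
  let Ψ : (Fin 2 → ℝ) ≃ᵐ F := ((MeasurableEquiv.toLp 2 (Fin 2 → ℝ)).trans
    b.repr.symm.toMeasurableEquiv).trans (MeasurableEquiv.addLeft y)
  have hΨ : MeasurePreserving Ψ :=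
    (measurePreserving_add_left volume y).comp (b.measurePreserving_repr_symm.comp
      (EuclideanSpace.volume_preserving_symm_measurableEquiv_toLp (Fin 2)).symm)
  have hΨchart (w : Fin 2 → ℝ) : Ψ (triangleChart A B w) = y + w 0 • a + (w 0 * w 1) • c := by
    change y + b.repr.symm (WithLp.toLp 2 (triangleChart A B w)) = _
    rw [← b.sum_repr_symm, Fin.sum_univ_two, hb0, hb1, smul_smul, smul_smul, add_assoc]
    simp only [triangleChart, Matrix.cons_val_zero, Matrix.cons_val_one]
    congr 3 <;> field_simp
  let e := (MeasurableEquiv.finTwoArrow (α := ℝ)).symm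
  have he : MeasurePreserving e := (volume_preserving_finTwoArrow ℝ).symm
  have himage : openTriangle y a c =
      Ψ '' (triangleChart A B '' (e '' Ioo (0 : ℝ) 1 ×ˢ Ioo (0 : ℝ) 1)) := by
    rw [openTriangle_eq_image, image_image, image_image]
    congr! 2 with w
    exact (hΨchart (e w)).symm
  have hS : MeasurableSet (e '' Ioo (0 : ℝ) 1 ×ˢ Ioo (0 : ℝ) 1) :=
    e.measurableSet_image.2 (measurableSet_Ioo.prod measurableSet_Ioo)
  rw [himage, hΨ.setIntegral_image_emb Ψ.measurableEmbedding,
    integral_image_eq_integral_abs_det_fderiv_smul volume hS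
      (fun w _ => (hasFDerivAt_triangleChart A B w).hasFDerivWithinAt)
      ((injOn_triangleChart hA.ne' hB.ne').mono ?_),
    he.setIntegral_image_emb e.measurableEmbedding, ← integral_smul]
  · refine setIntegral_congr_fun (measurableSet_Ioo.prod measurableSet_Ioo) fun w hw => ?_
    have ht : 0 < w.1 := hw.1.1
    rw [det_triangleChartDeriv, hΨchart, smul_smul]
    change |A * B * w.1| • g (y + w.1 • a + (w.1 * w.2) • c) = _
    rw [abs_of_pos (by positivity)]
  · rintro _ ⟨w, hw, rfl⟩
    exact hw.1.1.ne'

theorem setIntegral_openTriangle_norm_sub_rpow (hF : finrank ℝ F = 2) (y : F) {a c : F}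
    (hac : ⟪a, c⟫ = 0) {s : ℝ} (hs : s < 1) :
    ∫ x in openTriangle y a c, ‖x - y‖ ^ (-(2 * s)) =
      ‖a‖ * ‖c‖ / (2 * (1 - s)) * ∫ v in Ioo (0 : ℝ) 1, (‖a‖ ^ 2 + v ^ 2 * ‖c‖ ^ 2) ^ (-s) := by
  have hintegrand : EqOn
      (fun w : ℝ × ℝ => w.1 • ‖y + w.1 • a + (w.1 * w.2) • c - y‖ ^ (-(2 * s)))
      (fun w => w.1 ^ (1 - 2 * s) * (‖a‖ ^ 2 + w.2 ^ 2 * ‖c‖ ^ 2) ^ (-s))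
      (Ioo (0 : ℝ) 1 ×ˢ Ioo (0 : ℝ) 1) := by
    rintro ⟨t, v⟩ ⟨ht, -⟩
    have hQ : 0 ≤ ‖a‖ ^ 2 + v ^ 2 * ‖c‖ ^ 2 := by positivity
    dsimp only
    rw [add_assoc, add_sub_cancel_left, norm_smul_add_mul_smul_of_inner_eq_zero hac ht.1.le,
      Real.mul_rpow ht.1.le (Real.sqrt_nonneg _), Real.sqrt_eq_rpow, ← Real.rpow_mul hQ,
      smul_eq_mul, ← mul_assoc, mul_comm t, ← Real.rpow_add_one ht.1.ne']
    congr 2 <;> ring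
  rw [setIntegral_openTriangle hF y hac, setIntegral_congr_fun
    (measurableSet_Ioo.prod measurableSet_Ioo) hintegrand, Measure.volume_eq_prod,
    setIntegral_prod_mul (f := fun t : ℝ => t ^ (1 - 2 * s))
      (g := fun v : ℝ => (‖a‖ ^ 2 + v ^ 2 * ‖c‖ ^ 2) ^ (-s)),
    integral_Ioo_zero_one_rpow (by linarith), show 1 - 2 * s + 1 = 2 * (1 - s) by ring,
    smul_eq_mul]
  ring

end OpenTriangle

theorem stmt_9_general (s : ℝ) (hs : s ∈ Set.Ioo (0 : ℝ) 1) (β : ℝ) (hβ : β = 1 / (2 * (1 - s)))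
    (y q p : EuclideanSpace ℝ (Fin 2))
    (hright : (inner ℝ (q - y) (p - q) : ℝ) = 0) :
    ∫ x in {z : EuclideanSpace ℝ (Fin 2) | ∃ t ∈ Set.Ioo (0 : ℝ) 1, ∃ v ∈ Set.Ioo (0 : ℝ) 1,
        z = y + t • (q - y) + (t * v) • (p - q)}, ‖x - y‖ ^ (-(2 * s)) =
      2 * (‖q - y‖ * ‖p - q‖ / 2) * β *
        ∫ v in Set.Ioo (0 : ℝ) 1, (‖q - y‖ ^ 2 + v ^ 2 * ‖p - q‖ ^ 2) ^ (-s) := by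
  refine (setIntegral_openTriangle_norm_sub_rpow finrank_euclideanSpace_fin y hright hs.2).trans ?_
  rw [hβ]
  ring

theorem stmt_9 (s : ℝ) (hs : s ∈ Set.Ioo (0 : ℝ) 1) (β : ℝ) (hβ : β = 1 / (2 * (1 - s)))
    (y q p : EuclideanSpace ℝ (Fin 2)) (hqy : q ≠ y)
    (hright : (inner ℝ (q - y) (p - q) : ℝ) = 0) :
    ∫ x in {z : EuclideanSpace ℝ (Fin 2) | ∃ t ∈ Set.Ioo (0 : ℝ) 1, ∃ v ∈ Set.Ioo (0 : ℝ) 1,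
        z = y + t • (q - y) + (t * v) • (p - q)}, ‖x - y‖ ^ (-(2 * s)) =
      2 * (‖q - y‖ * ‖p - q‖ / 2) * β *
        ∫ v in Set.Ioo (0 : ℝ) 1, (‖q - y‖ ^ 2 + v ^ 2 * ‖p - q‖ ^ 2) ^ (-s) :=
  stmt_9_general s hs β hβ y q p hright
end

section
/- Let H be a real Hilbert space and φ₁ ∈ H with ‖φ₁‖ = 1, and let T : H → H be a compact self-adjoint positive operator with T φ₁ = λ₁^{-1} φ₁ where λ₁⁻¹ is a simple eigenvalue of T. Then the linear map L : H × ℝ → H × ℝ, L(v,t) = (v − λ₁ T v − t T φ₁, 2⟨φ₁, v⟩), is bijective. -/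
/-!
On `H × ℝ` the map is `1 - K`, where `K (v, t) = (lam • T v + t • T φ₁, t - 2 ⟪φ₁, v⟫)` is a
compact perturbation of `lam • T` by finite-rank terms. By the Fredholm alternative it is
therefore enough to show injectivity, which is linear algebra: `φ₁` spans the kernel of the
self-adjoint operator `1 - lam • T` and is thus orthogonal to its range.
-/

open ContinuousLinearMap

theorem IsCompactOperator.prodMk {M₁ M₂ M₃ : Type*} [Zero M₁] [TopologicalSpace M₁]
    [TopologicalSpace M₂] [TopologicalSpace M₃] {f : M₁ → M₂} {g : M₁ → M₃}
    (hf : IsCompactOperator f) (hg : IsCompactOperator g) :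
    IsCompactOperator fun x => (f x, g x) :=
  let ⟨A, hA, hAf⟩ := hf
  let ⟨B, hB, hBg⟩ := hg
  ⟨A ×ˢ B, hA.prod hB, Filter.inter_mem hAf hBg⟩

theorem IsCompactOperator.bijective_one_sub_of_injective {𝕜 X : Type*}
    [NontriviallyNormedField 𝕜] [NormedAddCommGroup X] [NormedSpace 𝕜 X] [CompleteSpace X]
    {K : X →L[𝕜] X} (hK : IsCompactOperator K) (hinj : Function.Injective ⇑(1 - K)) :
    Function.Bijective ⇑(1 - K) := by
  rcases hK.hasEigenvalue_or_mem_resolventSet one_ne_zero with heig | hres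
  · obtain ⟨v, hv⟩ := heig.exists_hasEigenvector
    refine absurd (hinj ?_) hv.2
    have hKv : K v = v := by simpa using hv.apply_eq_smul
    simp [hKv]
  · rw [spectrum.mem_resolventSet_iff, map_one] at hres
    exact ContinuousLinearMap.isUnit_iff_bijective.mp hres

section Linearization

variable {H : Type*} [NormedAddCommGroup H] [InnerProductSpace ℝ H]

noncomputable def linearizationCompactPart (T : H →L[ℝ] H) (φ : H) (lam : ℝ) :
    H × ℝ →L[ℝ] H × ℝ :=
  (lam • T ∘L fst ℝ H ℝ + smulRight (1 : ℝ →L[ℝ] ℝ) (T φ) ∘L snd ℝ H ℝ).prod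
    (snd ℝ H ℝ - 2 • innerSL ℝ φ ∘L fst ℝ H ℝ)

theorem one_sub_linearizationCompactPart_apply (T : H →L[ℝ] H) (φ : H) (lam : ℝ) (v : H)
    (t : ℝ) : (1 - linearizationCompactPart T φ lam) (v, t) =
      (v - lam • T v - t • T φ, 2 * (inner ℝ φ v : ℝ)) := by
  simp [linearizationCompactPart, sub_add_eq_sub_sub]

theorem isCompactOperator_linearizationCompactPart {T : H →L[ℝ] H} (hT : IsCompactOperator T)
    (φ : H) (lam : ℝ) : IsCompactOperator (linearizationCompactPart T φ lam) :=
  have hTφ : IsCompactOperator (smulRight (1 : ℝ →L[ℝ] ℝ) (T φ) ∘L snd ℝ H ℝ) :=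
    (isCompactOperator_of_locallyCompactSpace_rng (smulRight (1 : ℝ →L[ℝ] ℝ) (T φ))).comp_clm
      (snd ℝ H ℝ)
  .prodMk (((hT.smul lam).comp_clm (fst ℝ H ℝ)).add hTφ)
    (isCompactOperator_of_locallyCompactSpace_dom _)

theorem injective_one_sub_linearizationCompactPart {T : H →L[ℝ] H}
    (hT : (T : H →ₗ[ℝ] H).IsSymmetric) {φ : H} (hφ : φ ≠ 0) {lam : ℝ} (hlam : lam ≠ 0)
    (heig : T φ = lam⁻¹ • φ) (hsimple : ∀ v : H, v - lam • T v = 0 → ∃ a : ℝ, v = a • φ) :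
    Function.Injective ⇑(1 - linearizationCompactPart T φ lam) := by
  rw [injective_iff_map_eq_zero]
  rintro ⟨v, t⟩ h
  rw [one_sub_linearizationCompactPart_apply, Prod.mk_eq_zero, sub_eq_zero, heig, smul_smul]
    at h
  obtain ⟨hv, hinner⟩ := h
  have hperp : inner ℝ φ (v - lam • T v) = 0 := by
    have hsym : inner ℝ φ (T v) = inner ℝ (T φ) v := (hT φ v).symm
    rw [inner_sub_right, real_inner_smul_right, hsym, heig, real_inner_smul_left,
      mul_inv_cancel_left₀ hlam, sub_self]
  have ht : t = 0 := by
    rw [hv, real_inner_smul_right] at hperp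
    simpa [hlam, hφ] using hperp
  obtain ⟨a, rfl⟩ := hsimple v (by rw [hv, ht, zero_mul, zero_smul])
  have ha : a = 0 := by
    rw [real_inner_smul_right] at hinner
    simpa [hφ] using hinner
  simp [ha, ht]

end Linearization

theorem stmt_13_general {H : Type*} [NormedAddCommGroup H] [InnerProductSpace ℝ H] [CompleteSpace H]
    (T : H →L[ℝ] H) (hT : IsSelfAdjoint T) (hcomp : IsCompactOperator T)
    (φ₁ : H) (hφ : ‖φ₁‖ = 1) (lam1 : ℝ) (hlam : 0 < lam1)
    (heig : T φ₁ = lam1⁻¹ • φ₁)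
    (hsimple : ∀ v : H, v - lam1 • T v = 0 → ∃ a : ℝ, v = a • φ₁) :
    Function.Bijective (fun vt : H × ℝ =>
      (vt.1 - lam1 • T vt.1 - vt.2 • T φ₁, 2 * (inner ℝ φ₁ vt.1 : ℝ))) := by
  have hL : (fun vt : H × ℝ => (vt.1 - lam1 • T vt.1 - vt.2 • T φ₁, 2 * (inner ℝ φ₁ vt.1 : ℝ)))
      = ⇑(1 - linearizationCompactPart T φ₁ lam1) :=
    funext fun vt => (one_sub_linearizationCompactPart_apply T φ₁ lam1 vt.1 vt.2).symm
  have hφ₀ : φ₁ ≠ 0 := norm_ne_zero_iff.mp (by rw [hφ]; exact one_ne_zero)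
  rw [hL]
  exact (isCompactOperator_linearizationCompactPart hcomp φ₁ lam1).bijective_one_sub_of_injective
    (injective_one_sub_linearizationCompactPart hT.isSymmetric hφ₀ hlam.ne' heig hsimple)

theorem stmt_13 {H : Type*} [NormedAddCommGroup H] [InnerProductSpace ℝ H] [CompleteSpace H]
    (T : H →L[ℝ] H) (hT : IsSelfAdjoint T) (hcomp : IsCompactOperator T)
    (hpos : ∀ v : H, 0 ≤ (inner ℝ (T v) v : ℝ))
    (φ₁ : H) (hφ : ‖φ₁‖ = 1) (lam1 : ℝ) (hlam : 0 < lam1)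
    (heig : T φ₁ = lam1⁻¹ • φ₁)
    (hsimple : ∀ v : H, v - lam1 • T v = 0 → ∃ a : ℝ, v = a • φ₁) :
    Function.Bijective (fun vt : H × ℝ =>
      (vt.1 - lam1 • T vt.1 - vt.2 • T φ₁, 2 * (inner ℝ φ₁ vt.1 : ℝ))) :=
  stmt_13_general T hT hcomp φ₁ hφ lam1 hlam heig hsimple
end
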